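/- Let D be a defeasible theory and (⟨T_{D,λ}, F_{D,λ}⟩)_{λ} the transfinite sequence of interpretations defined for D under the NDL well-founded semantics (I₀=⟨∅,∅⟩, I_{λ+1}=W_D(I_λ), componentwise unions at limits). For every ordinal λ ≥ 0 there exists an ordinal η ≥ 0 such that for every literal p ∈ Lit(D): (1) if p ∈ T_{D,λ} then p ∈ X_D↑η, and (2) if p ∈ F_{D,λ} then p ∉ β_D(X_D↑η). -/

import Mathlib

namespace DLWFS

universe u

/-- Ground literals over a type `A` of atoms: atoms and their classical complements. -/
inductive Lit (A : Type u) : Type u where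
  | pos : A → Lit A
  | neg : A → Lit A

/-- The classical complement `p̄` of a literal `p`. -/
def Lit.compl {A : Type u} : Lit A → Lit A
  | .pos a => .neg a
  | .neg a => .pos a

/-- The three kinds of rules of a defeasible theory. -/
inductive RuleKind : Type where
  | strict
  | defeasible
  | defeater
deriving DecidableEq

/-- A rule of a defeasible theory: a kind, a body (a set of literals) and a head literal. -/
structure DRule (A : Type u) where
  kind : RuleKind
  body : Set (Lit A)
  head : Lit A

/-- A defeasible theory `D = ⟨R, C, ≺⟩`. -/
structure DTheory (A : Type u) where
  rules : Set (DRule A)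
  conflicts : Set (Set (Lit A))
  prec : DRule A → DRule A → Prop

namespace DTheory

variable {A : Type u}

/-- The strict rules `R_s`. -/
def Rs (D : DTheory A) : Set (DRule A) := {r ∈ D.rules | r.kind = RuleKind.strict}

/-- The defeasible rules `R_d`. -/
def Rd (D : DTheory A) : Set (DRule A) := {r ∈ D.rules | r.kind = RuleKind.defeasible}

/-- The defeater rules `R_u`. -/
def Ru (D : DTheory A) : Set (DRule A) := {r ∈ D.rules | r.kind = RuleKind.defeater}

/-- `C[p]`: the conflict sets containing literal `p`. -/
def Cset (D : DTheory A) (p : Lit A) : Set (Set (Lit A)) := {c ∈ D.conflicts | p ∈ c}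

/-- Structural conditions in the definition of a defeasible theory: a countable set of
rules with finite bodies, a countable set of finite conflict sets containing every
minimal conflict set `{p, ¬p}`, and an acyclic priority relation over non-strict rules. -/
def WellFormed (D : DTheory A) : Prop :=
  D.rules.Countable ∧ D.conflicts.Countable ∧
  (∀ r ∈ D.rules, r.body.Finite) ∧
  (∀ c ∈ D.conflicts, c.Finite) ∧
  (∀ p : A, ({Lit.pos p, Lit.neg p} : Set (Lit A)) ∈ D.conflicts) ∧
  (∀ r s, D.prec r s → r.kind ≠ RuleKind.strict ∧ s.kind ≠ RuleKind.strict) ∧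
  (∀ r, ¬ Relation.TransGen D.prec r r)

/-- `C = C_MIN`: the conflict sets are exactly the minimal ones `{p, ¬p}`. -/
def MinimalConflicts (D : DTheory A) : Prop :=
  D.conflicts = {c | ∃ p : A, c = ({Lit.pos p, Lit.neg p} : Set (Lit A))}

end DTheory

/-- A 3-valued interpretation: a pair `⟨T, F⟩` of sets. -/
abbrev Interp (L : Type u) : Type u := Set L × Set L

variable {A : Type u}

/-- `S` is ADL-unfounded with respect to theory `D` and interpretation `I = ⟨T, F⟩`. -/
def ADLUnfounded (D : DTheory A) (I : Interp (Lit A)) (S : Set (Lit A)) : Prop :=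
  ∀ p ∈ S,
    (∀ r ∈ D.Rs, r.head = p → (r.body ∩ (I.2 ∪ S)).Nonempty) ∧
    (∀ r ∈ D.Rd, r.head = p →
      (r.body ∩ (I.2 ∪ S)).Nonempty ∨
      ∃ c ∈ D.conflicts, p ∈ c ∧
        ∀ q ∈ c \ {p}, ∃ s ∈ D.rules, s.head = q ∧ s.body ⊆ I.1 ∧
          (D.prec r s ∨ s.kind = RuleKind.strict))

/-- `S` is NDL-unfounded with respect to theory `D` and interpretation `I = ⟨T, F⟩`. -/
def NDLUnfounded (D : DTheory A) (I : Interp (Lit A)) (S : Set (Lit A)) : Prop :=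
  ∀ p ∈ S,
    (∀ r ∈ D.Rs, r.head = p → (r.body ∩ (I.2 ∪ S)).Nonempty) ∧
    (∀ r ∈ D.Rd, r.head = p →
      (r.body ∩ (I.2 ∪ S)).Nonempty ∨
      ∃ c ∈ D.conflicts, p ∈ c ∧
        ∀ q ∈ c \ {p}, ∃ s ∈ D.rules, s.head = q ∧ s.body ⊆ I.1 ∧
          ¬ D.prec s r)

/-- `U_D(I)` for ADL: the union of all ADL-unfounded sets. -/
def UA (D : DTheory A) (I : Interp (Lit A)) : Set (Lit A) :=
  ⋃₀ {S | ADLUnfounded D I S}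

/-- `U_D(I)` for NDL: the union of all NDL-unfounded sets. -/
def UN (D : DTheory A) (I : Interp (Lit A)) : Set (Lit A) :=
  ⋃₀ {S | NDLUnfounded D I S}

/-- `T_D(I)`: the literals having a witness of provability with respect to `I = ⟨T, F⟩`. -/
def TD (D : DTheory A) (I : Interp (Lit A)) : Set (Lit A) :=
  {p | ∃ r ∈ D.rules, r.head = p ∧ r.body ⊆ I.1 ∧
    (r.kind = RuleKind.strict ∨
      (r.kind = RuleKind.defeasible ∧
        ∀ c ∈ D.conflicts, p ∈ c →
          ∃ q ∈ c \ {p}, ∀ s ∈ D.rules, s.head = q →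
            (D.prec s r ∨ (s.body ∩ I.2).Nonempty)))}

/-- `W_D` for ADL. -/
def WA (D : DTheory A) (I : Interp (Lit A)) : Interp (Lit A) := (TD D I, UA D I)

/-- `W_D` for NDL. -/
def WN (D : DTheory A) (I : Interp (Lit A)) : Interp (Lit A) := (TD D I, UN D I)

/-- `I` is the well-founded model for the operator `W`: the least fixpoint of `W`
(componentwise order). -/
def IsWFModel {L : Type u} (W : Interp L → Interp L) (I : Interp L) : Prop :=
  W I = I ∧ ∀ J, W J = J → I.1 ⊆ J.1 ∧ I.2 ⊆ J.2

/-- A rule of a normal logic program: `head ← pos, ∼neg`. -/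
structure NRule (A : Type u) where
  head : A
  pos : Set A
  neg : Set A

/-- A normal logic program: a set of rules. -/
abbrev NProgram (A : Type u) : Type u := Set (NRule A)

/-- Structural conditions in the definition of a normal logic program: a countable
set of ground rules with finite bodies. -/
def NProgram.WellFormed (P : NProgram A) : Prop :=
  P.Countable ∧ ∀ r ∈ P, r.pos.Finite ∧ r.neg.Finite

/-- The immediate consequence operator `T_Π` on 3-valued interpretations. -/
def TP (P : NProgram A) (I : Interp A) : Set A :=
  {a | ∃ r ∈ P, r.head = a ∧ r.pos ⊆ I.1 ∧ r.neg ⊆ I.2}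

/-- `S` is an unfounded set of program `P` with respect to interpretation `I = ⟨T, F⟩`. -/
def PUnfounded (P : NProgram A) (I : Interp A) (S : Set A) : Prop :=
  ∀ p ∈ S, ∀ r ∈ P, r.head = p →
    (r.pos ∩ (I.2 ∪ S)).Nonempty ∨ (r.neg ∩ I.1).Nonempty

/-- `U_Π(I)`: the greatest unfounded set (union of all unfounded sets). -/
def UP (P : NProgram A) (I : Interp A) : Set A :=
  ⋃₀ {S | PUnfounded P I S}

/-- `W_Π(I) = ⟨T_Π(I), U_Π(I)⟩`. -/
def WP (P : NProgram A) (I : Interp A) : Interp A := (TP P I, UP P I)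

/-- Transfinite iteration of an operator `W` from `⊥`, taking suprema at limit ordinals. -/
noncomputable def iterW {α : Type*} [CompleteLattice α] (W : α → α) : Ordinal.{0} → α :=
  fun o =>
    Ordinal.limitRecOn (motive := fun _ => α) o ⊥ (fun _ ih => W ih)
      (fun o' _ ih => ⨆ x : Set.Iio o', ih x.1 x.2)

/-- One step of the immediate consequence operator for a set of defeasible-theory rules. -/
def TRstep (R : Set (DRule A)) (S : Set (Lit A)) : Set (Lit A) :=
  {p | ∃ r ∈ R, r.head = p ∧ r.body ⊆ S}

/-- The finite iterates `T_R ↑ n`. -/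
def TRiter (R : Set (DRule A)) : ℕ → Set (Lit A)
  | 0 => ∅
  | n + 1 => TRstep R (TRiter R n)

/-- `Cl(R) = T_R ↑ ω`. -/
def ClR (R : Set (DRule A)) : Set (Lit A) := ⋃ n, TRiter R n

/-- The `α`-reduct `D_α^S` of a defeasible theory. -/
def alphaReduct (D : DTheory A) (S : Set (Lit A)) : Set (DRule A) :=
  D.Rs ∪ {r ∈ D.Rd | ∀ c ∈ D.conflicts, r.head ∈ c → ∃ q ∈ c \ {r.head}, q ∉ S}

/-- The ambiguity-propagating operator `α_D(S) = Cl(D_α^S)`. -/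
def alphaOp (D : DTheory A) (S : Set (Lit A)) : Set (Lit A) := ClR (alphaReduct D S)

/-- The `β`-reduct `D_β^S` of a defeasible theory. -/
def betaReduct (D : DTheory A) (S : Set (Lit A)) : Set (DRule A) :=
  D.Rs ∪ {r ∈ D.Rd | ∀ c ∈ D.conflicts, r.head ∈ c →
    ∃ q ∈ c \ {r.head}, ∀ s ∈ D.rules, s.head = q → (¬ s.body ⊆ S ∨ D.prec s r)}

/-- The ambiguity-blocking operator `β_D(S) = Cl(D_β^S)`. -/
def betaOp (D : DTheory A) (S : Set (Lit A)) : Set (Lit A) := ClR (betaReduct D S)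

/-- `S` is an `α`-stable set of `D`. -/
def AlphaStable (D : DTheory A) (S : Set (Lit A)) : Prop := alphaOp D S = S

/-- `S` is a `β`-stable set of `D`. -/
def BetaStable (D : DTheory A) (S : Set (Lit A)) : Prop := betaOp D S = S

/-- The sequence `X_D↑λ`: `X↑0 = ∅`, `X↑(λ+1) = β_D(β_D(X↑λ))`, unions at limits. -/
noncomputable def Xseq (D : DTheory A) : Ordinal.{0} → Set (Lit A) :=
  iterW (fun S => betaOp D (betaOp D S))

/-- The Gelfond–Lifschitz reduct `Π^S`. -/
def glReduct (P : NProgram A) (S : Set A) : NProgram A :=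
  {r' | ∃ r ∈ P, r.neg ∩ S = ∅ ∧ r' = NRule.mk r.head r.pos ∅}

/-- One step of the immediate consequence operator for a NAF-free program. -/
def TPstep (P : NProgram A) (S : Set A) : Set A :=
  {a | ∃ r ∈ P, r.head = a ∧ r.pos ⊆ S}

/-- The finite iterates `T_Π ↑ n` of a NAF-free program. -/
def TPiter (P : NProgram A) : ℕ → Set A
  | 0 => ∅
  | n + 1 => TPstep P (TPiter P n)

/-- `Cl(Π) = T_Π ↑ ω`. -/
def ClP (P : NProgram A) : Set A := ⋃ n, TPiter P n

/-- The Gelfond–Lifschitz operator `γ_Π(S) = Cl(Π^S)`. -/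
def gamma (P : NProgram A) (S : Set A) : Set A := ClP (glReduct P S)

/-- `S` is a stable model of `P`. -/
def StableModel (P : NProgram A) (S : Set A) : Prop := gamma P S = S

/-- `Prod(C[p])`: all sets obtained by choosing one literal other than `p` from each
conflict set containing `p`. -/
def ProdC (D : DTheory A) (p : Lit A) : Set (Set (Lit A)) :=
  {Q | ∃ f : Set (Lit A) → Lit A,
    (∀ c ∈ D.conflicts, p ∈ c → f c ∈ c \ {p}) ∧
    Q = f '' {c ∈ D.conflicts | p ∈ c}}

/-- The logic program translation `Π_D` of a defeasible theory `D` (negative literals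
are treated as fresh atoms, so the atoms of the program are the literals of `D`). -/
def lpTrans (D : DTheory A) : NProgram (Lit A) :=
  {r' | ∃ r ∈ D.Rs, r' = NRule.mk r.head r.body ∅} ∪
  {r' | ∃ r ∈ D.Rd, ∃ Q ∈ ProdC D r.head, r' = NRule.mk r.head r.body Q}

/-- The explicit version `Φ` of a normal program `Π`: atoms of `Φ` are the literals
over the atoms of `Π` (`¬p` being a fresh atom). -/
def explicitVer (P : NProgram A) : NProgram (Lit A) :=
  {r' | ∃ r ∈ P, r' = NRule.mk (Lit.pos r.head) (Lit.pos '' r.pos ∪ Lit.neg '' r.neg) ∅} ∪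
  {r' | ∃ p : A, r' = NRule.mk (Lit.neg p) ∅ {Lit.pos p}}

/-- The minimal conflict sets over atom type `A`. -/
def CMin (A : Type u) : Set (Set (Lit A)) :=
  {c | ∃ p : A, c = ({Lit.pos p, Lit.neg p} : Set (Lit A))}

/-- The defeasible theory translation `D_Π` of a normal program `Π`: each program rule
becomes a strict rule (default literals `∼b` becoming negative literals `¬b`), and each
atom `p` yields a presumption `∅ ⇒ ¬p`; conflict sets are minimal and `≺` is empty. -/
def dtTrans (P : NProgram A) : DTheory A :=
  { rules :=
      {e | ∃ r ∈ P, e = DRule.mk RuleKind.strict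
            (Lit.pos '' r.pos ∪ Lit.neg '' r.neg) (Lit.pos r.head)} ∪
      {e | ∃ p : A, e = DRule.mk RuleKind.defeasible ∅ (Lit.neg p)}
    conflicts := CMin A
    prec := fun _ _ => False }

/-- `M^¬ = M ∪ {¬p : p ∉ M}`, atoms being identified with positive literals. -/
def negCompl (M : Set A) : Set (Lit A) :=
  Lit.pos '' M ∪ Lit.neg '' {p | p ∉ M}

end DLWFS

namespace DLWFS

/-!
By induction on `λ` one maintains, for `⟨T, F⟩ = ⟨T_{D,λ}, F_{D,λ}⟩` and `Y = X_D↑η`, the invariant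
`T ⊆ Y` and `F ∩ β_D(Y) = ∅`. At a successor step, a witness of provability for `p` lies in the
β-reduct of `β_D(Y)`: every rule attacking it is either inferior to it or has a body literal in
`F`, hence a body not contained in `β_D(Y)`. Dually, no literal of an NDL-unfounded set `S` is
derived in `Cl(D_β^{Y'})`, `Y' = β_D(β_D(Y))`: the first rule to derive one has a body avoiding
both `F` and `S`, so unfoundedness offers a conflict set whose other members all have rules with
bodies in `T ⊆ Y'` not inferior to it, which is exactly what keeps it out of `D_β^{Y'}`.
-/

section IterW

variable {α : Type*} [CompleteLattice α]

lemma iterW_zero (W : α → α) : iterW W 0 = ⊥ :=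
  Ordinal.limitRecOn_zero _ _ _

lemma iterW_add_one (W : α → α) (o : Ordinal) : iterW W (o + 1) = W (iterW W o) :=
  Ordinal.limitRecOn_add_one _ _ _ _

lemma iterW_limit (W : α → α) {o : Ordinal} (h : Order.IsSuccLimit o) :
    iterW W o = ⨆ x : Set.Iio o, iterW W x.1 :=
  Ordinal.limitRecOn_limit _ _ _ _ h

lemma iterW_le_apply {W : α → α} (hW : Monotone W) (o : Ordinal) :
    iterW W o ≤ W (iterW W o) := by
  induction o using Ordinal.limitRecOn with
  | zero => rw [iterW_zero]; exact bot_le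
  | add_one o ih => rw [iterW_add_one]; exact hW ih
  | limit o hl ih =>
    rw [iterW_limit W hl]
    exact iSup_le fun x => (ih x.1 x.2).trans (hW (le_iSup (fun y : Set.Iio o => iterW W y.1) x))

lemma iterW_mono {W : α → α} (hW : Monotone W) : Monotone (iterW W) := by
  intro a b hab
  induction b using Ordinal.limitRecOn generalizing a with
  | zero => rw [nonpos_iff_eq_zero.mp hab]
  | add_one b ih =>
    rcases hab.eq_or_lt with rfl | hlt
    · exact le_rfl
    · rw [iterW_add_one]
      exact (ih (Order.lt_add_one_iff.mp hlt)).trans (iterW_le_apply hW b)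
  | limit b hl _ =>
    rcases hab.eq_or_lt with rfl | hlt
    · exact le_rfl
    · rw [iterW_limit W hl]
      exact le_iSup (fun x : Set.Iio b => iterW W x.1) ⟨a, hlt⟩

end IterW

section Closure

variable {A : Type*}

lemma TRiter_monotone (R : Set (DRule A)) : Monotone (TRiter R) := by
  refine monotone_nat_of_le_succ fun n => ?_
  induction n with
  | zero => exact Set.empty_subset _
  | succ n ih => rintro p ⟨r, hr, hhead, hbody⟩; exact ⟨r, hr, hhead, hbody.trans ih⟩

lemma TRiter_mono_rules {R R' : Set (DRule A)} (h : R ⊆ R') (n : ℕ) :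
    TRiter R n ⊆ TRiter R' n := by
  induction n with
  | zero => exact subset_rfl
  | succ n ih => rintro p ⟨r, hr, hhead, hbody⟩; exact ⟨r, h hr, hhead, hbody.trans ih⟩

lemma ClR_mono {R R' : Set (DRule A)} (h : R ⊆ R') : ClR R ⊆ ClR R' :=
  Set.iUnion_mono (TRiter_mono_rules h)

lemma TRiter_subset_ClR (R : Set (DRule A)) (n : ℕ) : TRiter R n ⊆ ClR R :=
  Set.subset_iUnion (TRiter R) n

lemma head_mem_ClR {R : Set (DRule A)} {r : DRule A} (hr : r ∈ R) (hfin : r.body.Finite)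
    (hbody : r.body ⊆ ClR R) : r.head ∈ ClR R := by
  obtain ⟨n, hn⟩ := (TRiter_monotone R).directed_le.exists_mem_subset_of_finset_subset_biUnion
    (s := hfin.toFinset) (by rwa [Set.Finite.coe_toFinset])
  rw [Set.Finite.coe_toFinset] at hn
  exact TRiter_subset_ClR R (n + 1) ⟨r, hr, rfl, hn⟩

end Closure

section Beta

variable {A : Type*}

lemma betaReduct_anti (D : DTheory A) : Antitone (betaReduct D) := by
  rintro S S' hS r (hr | ⟨hrd, hblocked⟩)
  · exact Or.inl hr
  · refine Or.inr ⟨hrd, fun c hc hrc => ?_⟩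
    obtain ⟨q, hq, hs⟩ := hblocked c hc hrc
    exact ⟨q, hq, fun s hs' hsq => (hs s hs' hsq).imp_left fun hns hsub => hns (hsub.trans hS)⟩

lemma betaOp_anti (D : DTheory A) : Antitone (betaOp D) :=
  fun _ _ hS => ClR_mono (betaReduct_anti D hS)

lemma Xseq_mono (D : DTheory A) : Monotone (Xseq D) :=
  iterW_mono fun _ _ hS => betaOp_anti D (betaOp_anti D hS)

lemma Xseq_add_one (D : DTheory A) (o : Ordinal) :
    Xseq D (o + 1) = betaOp D (betaOp D (Xseq D o)) :=
  iterW_add_one _ o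

lemma Xseq_subset_betaOp_betaOp (D : DTheory A) (o : Ordinal) :
    Xseq D o ⊆ betaOp D (betaOp D (Xseq D o)) :=
  Xseq_add_one D o ▸ Xseq_mono D (Order.le_succ o)

lemma TD_subset_betaOp {D : DTheory A} (hbody : ∀ r ∈ D.rules, r.body.Finite) {I : Interp (Lit A)}
    {S : Set (Lit A)} (hF : Disjoint I.2 S) (hT : I.1 ⊆ betaOp D S) : TD D I ⊆ betaOp D S := by
  rintro p ⟨r, hr, rfl, hrT, hkind⟩
  have hred : r ∈ betaReduct D S := by
    rcases hkind with hstrict | ⟨hdef, hattack⟩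
    · exact Or.inl ⟨hr, hstrict⟩
    · refine Or.inr ⟨⟨hr, hdef⟩, fun c hc hrc => ?_⟩
      obtain ⟨q, hq, hs⟩ := hattack c hc hrc
      refine ⟨q, hq, fun s hs' hsq => ?_⟩
      rcases hs s hs' hsq with hprec | ⟨x, hxs, hxF⟩
      · exact Or.inr hprec
      · exact Or.inl fun hsub => hF.notMem_of_mem_left hxF (hsub hxs)
  exact head_mem_ClR hred (hbody r hr) (hrT.trans hT)

lemma NDLUnfounded.disjoint_TRiter {D : DTheory A} {I : Interp (Lit A)} {S Z : Set (Lit A)}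
    (hS : NDLUnfounded D I S) (hT : I.1 ⊆ Z) (hF : Disjoint I.2 (betaOp D Z)) (n : ℕ) :
    Disjoint S (TRiter (betaReduct D Z) n) := by
  induction n with
  | zero => exact Set.disjoint_empty S
  | succ n ih =>
    refine Set.disjoint_left.mpr ?_
    rintro q hqS ⟨r, hred, rfl, hrn⟩
    have hfree : ¬ (r.body ∩ (I.2 ∪ S)).Nonempty := by
      rintro ⟨x, hxr, hxF | hxS⟩
      · exact hF.notMem_of_mem_left hxF (TRiter_subset_ClR _ n (hrn hxr))
      · exact ih.notMem_of_mem_left hxS (hrn hxr)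
    rcases hred with hstrict | ⟨hdef, hblocked⟩
    · exact hfree ((hS _ hqS).1 r hstrict rfl)
    · obtain ⟨c, hc, hrc, hdefeat⟩ := ((hS _ hqS).2 r hdef rfl).resolve_left hfree
      obtain ⟨q', hq', hs⟩ := hblocked c hc hrc
      obtain ⟨s, hs', hsq, hsT, hnprec⟩ := hdefeat q' hq'
      exact (hs s hs' hsq).elim (fun hns => hns (hsT.trans hT)) hnprec

lemma UN_disjoint_betaOp {D : DTheory A} {I : Interp (Lit A)} {Z : Set (Lit A)} (hT : I.1 ⊆ Z)
    (hF : Disjoint I.2 (betaOp D Z)) : Disjoint (UN D I) (betaOp D Z) := by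
  refine Set.disjoint_sUnion_left.mpr fun S hS => ?_
  exact Set.disjoint_iUnion_right.mpr (NDLUnfounded.disjoint_TRiter hS hT hF)

end Beta

section Approximation

variable {A : Type*}

def Approximates (D : DTheory A) (I : Interp (Lit A)) (Y : Set (Lit A)) : Prop :=
  I.1 ⊆ Y ∧ Disjoint I.2 (betaOp D Y)

variable {D : DTheory A}

lemma Approximates.mono {I : Interp (Lit A)} {Y Y' : Set (Lit A)} (h : Approximates D I Y)
    (hY : Y ⊆ Y') : Approximates D I Y' :=
  ⟨h.1.trans hY, h.2.mono_right (betaOp_anti D hY)⟩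

lemma approximates_bot (Y : Set (Lit A)) : Approximates D ⊥ Y :=
  ⟨Set.empty_subset Y, Set.empty_disjoint _⟩

lemma approximates_iSup {ι : Type*} {I : ι → Interp (Lit A)} {Y : Set (Lit A)}
    (h : ∀ i, Approximates D (I i) Y) : Approximates D (⨆ i, I i) Y := by
  rw [Approximates, Prod.fst_iSup, Prod.snd_iSup]
  exact ⟨Set.iUnion_subset fun i => (h i).1, Set.disjoint_iUnion_left.mpr fun i => (h i).2⟩

lemma Approximates.WN (hbody : ∀ r ∈ D.rules, r.body.Finite) {I : Interp (Lit A)}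
    {Y : Set (Lit A)} (h : Approximates D I Y) (hY : Y ⊆ betaOp D (betaOp D Y)) :
    Approximates D (WN D I) (betaOp D (betaOp D Y)) := by
  have h' := h.mono hY
  exact ⟨TD_subset_betaOp hbody h.2 h'.1, UN_disjoint_betaOp h'.1 h'.2⟩

lemma exists_approximates_iterW_WN (hbody : ∀ r ∈ D.rules, r.body.Finite) (lam : Ordinal) :
    ∃ eta, Approximates D (iterW (WN D) lam) (Xseq D eta) := by
  induction lam using Ordinal.limitRecOn with
  | zero => exact ⟨0, iterW_zero (WN D) ▸ approximates_bot _⟩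
  | add_one lam ih =>
    obtain ⟨eta, h⟩ := ih
    refine ⟨eta + 1, ?_⟩
    rw [iterW_add_one, Xseq_add_one]
    exact h.WN hbody (Xseq_subset_betaOp_betaOp D eta)
  | limit lam hl ih =>
    choose eta h using fun x : Set.Iio lam => ih x.1 x.2
    refine ⟨⨆ x, eta x, ?_⟩
    rw [iterW_limit _ hl]
    exact approximates_iSup fun x => (h x).mono (Xseq_mono D (Ordinal.le_iSup eta x))

end Approximation

/-- Let `D` be a defeasible theory and `(⟨T_{D,λ}, F_{D,λ}⟩)` the transfinite sequence
of interpretations under the NDL well-founded semantics. For every ordinal `λ` there is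
an ordinal `η` such that for every literal `p`: if `p ∈ T_{D,λ}` then `p ∈ X_D↑η`, and
if `p ∈ F_{D,λ}` then `p ∉ β_D(X_D↑η)`. -/
theorem beta_iteration_complete {A : Type*} (D : DTheory A) (hwf : D.WellFormed) :
    ∀ lam : Ordinal, ∃ eta : Ordinal, ∀ p : Lit A,
      (p ∈ (iterW (WN D) lam).1 → p ∈ Xseq D eta) ∧
      (p ∈ (iterW (WN D) lam).2 → p ∉ betaOp D (Xseq D eta)) := by
  intro lam
  obtain ⟨eta, hT, hF⟩ := exists_approximates_iterW_WN hwf.2.2.1 lam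
  exact ⟨eta, fun p => ⟨@hT p, fun hp => hF.notMem_of_mem_left hp⟩⟩

end DLWFS
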